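/- arXiv:1305.3100 — 3 statements merged into one kernel-verified Lean document; each statement's English description precedes it below -/
import Mathlib

section
/- Let η : (a,b) → (ã,b̃) be a locally absolutely continuous increasing bijection and Γ : (a,b) → ℝ^{2×2} locally absolutely continuous with det Γ(x) = 1 for all x. Define R̃, Q̃ on (ã,b̃) by η'·(R̃∘η) = Γ* R Γ and η'·(Q̃∘η) = Γ* Q Γ + Γ* J Γ'. Then for any locally absolutely continuous f̃ : (ã,b̃) → ℂ² satisfying J f̃' + Q̃ f̃ = R̃ g̃ a.e. on (ã,b̃), the function f(x) = Γ(x) f̃(η(x)) satisfies J f' + Q f = R g a.e. on (a,b), where g(x) = Γ(x) g̃(η(x)). -/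
/-!
Differentiating `f = Γ (f̃ ∘ η)` gives `f' = Γ' (f̃ ∘ η) + η' Γ (f̃' ∘ η)`.
Multiplying `J f' + Q f - R g` on the left by `Γᵀ` and using `Γᵀ J Γ = J` (which holds
because `det Γ = 1`) turns it into `η' (J f̃' + Q̃ f̃ - R̃ g̃) ∘ η = 0`, and `Γᵀ` is invertible.
-/

open MeasureTheory Set Matrix Complex

noncomputable section

/-- The symplectic matrix `J` as a real matrix. -/
def Jr : Matrix (Fin 2) (Fin 2) ℝ := !![0, -1; 1, 0]

/-- The symplectic matrix `J` as a complex matrix. -/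
def Jc : Matrix (Fin 2) (Fin 2) ℂ := !![0, -1; 1, 0]

theorem Jr_map_ofReal : Jr.map ofReal = Jc := by
  ext i j
  fin_cases i <;> fin_cases j <;> simp [Jr, Jc]

namespace Matrix

variable {m n o : Type*}

theorem transpose_mul_J_mul_self {K : Type*} [CommRing K] (A : Matrix (Fin 2) (Fin 2) K) :
    Aᵀ * !![0, -1; 1, 0] * A = A.det • !![0, -1; 1, 0] := by
  ext i j
  fin_cases i <;> fin_cases j <;>
    simp [mul_apply, det_fin_two, Fin.sum_univ_two] <;> ring

@[simp]
theorem map_ofReal_mul [Fintype n] (A : Matrix m n ℝ) (B : Matrix n o ℝ) :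
    (A * B).map ofReal = A.map ofReal * B.map ofReal :=
  Matrix.map_mul (f := ofRealHom)

@[simp]
theorem map_ofReal_smul (r : ℝ) (A : Matrix m n ℝ) :
    (r • A).map ofReal = (r : ℂ) • A.map ofReal := by
  ext
  simp

@[simp]
theorem map_ofReal_add (A B : Matrix m n ℝ) :
    (A + B).map ofReal = A.map ofReal + B.map ofReal := by
  ext
  simp

theorem det_map_ofReal [Fintype n] [DecidableEq n] (A : Matrix n n ℝ) :
    (A.map ofReal).det = A.det :=
  (ofRealHom.map_det A).symm

theorem hasDerivAt_map_ofReal_mulVec [Fintype n] {A : ℝ → Matrix m n ℝ} {A' : Matrix m n ℝ}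
    {u : ℝ → n → ℂ} {u' : n → ℂ} {x : ℝ}
    (hA : ∀ i j, HasDerivAt (fun t => A t i j) (A' i j) x) (hu : HasDerivAt u u' x) :
    HasDerivAt (fun t => (A t).map ofReal *ᵥ u t)
      (A'.map ofReal *ᵥ u x + (A x).map ofReal *ᵥ u') x := by
  rw [hasDerivAt_pi] at hu ⊢
  intro i
  have := HasDerivAt.fun_sum (u := Finset.univ) fun j _ => ((hA i j).ofReal_comp).mul (hu j)
  simpa [mulVec, dotProduct, Finset.sum_add_distrib] using this

variable [Fintype n] [DecidableEq n] {K : Type*} [CommRing K]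

theorem dirac_eq_of_transformed_dirac_eq {J G G' Q R tQ tR : Matrix n n K} {s : K}
    {u u' v : n → K}
    (hJ : Gᵀ * J * G = J) (hG : IsUnit G.det)
    (hR : s • tR = Gᵀ * R * G) (hQ : s • tQ = Gᵀ * Q * G + Gᵀ * J * G')
    (hsol : J *ᵥ u' + tQ *ᵥ u = tR *ᵥ v) :
    J *ᵥ (G' *ᵥ u + s • (G *ᵥ u')) + Q *ᵥ (G *ᵥ u) = R *ᵥ (G *ᵥ v) := by
  apply mulVec_injective_of_isUnit ((isUnit_iff_isUnit_det _).2 (by rwa [det_transpose]))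
  calc Gᵀ *ᵥ (J *ᵥ (G' *ᵥ u + s • (G *ᵥ u')) + Q *ᵥ (G *ᵥ u))
      = s • (J *ᵥ u') + (Gᵀ * Q * G + Gᵀ * J * G') *ᵥ u := by
        simp only [mulVec_add, mulVec_smul, mulVec_mulVec, add_mulVec, ← mul_assoc, hJ]
        abel
    _ = s • (tR *ᵥ v) := by rw [← hQ, smul_mulVec, ← smul_add, hsol]
    _ = Gᵀ *ᵥ (R *ᵥ (G *ᵥ v)) := by rw [← smul_mulVec, hR, mulVec_mulVec, mulVec_mulVec]

end Matrix

theorem liouville_transform_maps_solutions_general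
    (a b ta tb : ℝ)
    (η η' : ℝ → ℝ) (Γ Γ' : ℝ → Matrix (Fin 2) (Fin 2) ℝ)
    (hηd : ∀ x ∈ Ioo a b, HasDerivAt η (η' x) x)
    (hηbij : BijOn η (Ioo a b) (Ioo ta tb))
    (hΓd : ∀ x ∈ Ioo a b, ∀ i j, HasDerivAt (fun t => Γ t i j) (Γ' x i j) x)
    (hdet : ∀ x ∈ Ioo a b, (Γ x).det = 1)
    (R Q : ℝ → Matrix (Fin 2) (Fin 2) ℝ) (tR tQ : ℝ → Matrix (Fin 2) (Fin 2) ℝ)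
    (hR : ∀ x ∈ Ioo a b, η' x • tR (η x) = (Γ x)ᵀ * R x * Γ x)
    (hQ : ∀ x ∈ Ioo a b, η' x • tQ (η x) = (Γ x)ᵀ * Q x * Γ x + (Γ x)ᵀ * Jr * Γ' x)
    (tf tf' tg : ℝ → Fin 2 → ℂ)
    (htfd : ∀ y ∈ Ioo ta tb, ∀ i, HasDerivAt (fun t => tf t i) (tf' y i) y)
    (htsol : ∀ y ∈ Ioo ta tb,
      Jc *ᵥ tf' y + (tQ y).map Complex.ofReal *ᵥ tf y = (tR y).map Complex.ofReal *ᵥ tg y)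
    (f g f' : ℝ → Fin 2 → ℂ)
    (hf : ∀ x ∈ Ioo a b, f x = (Γ x).map Complex.ofReal *ᵥ tf (η x))
    (hg : ∀ x ∈ Ioo a b, g x = (Γ x).map Complex.ofReal *ᵥ tg (η x))
    (hfd : ∀ x ∈ Ioo a b, ∀ i, HasDerivAt (fun t => f t i) (f' x i) x) :
    ∀ x ∈ Ioo a b,
      Jc *ᵥ f' x + (Q x).map Complex.ofReal *ᵥ f x = (R x).map Complex.ofReal *ᵥ g x := by
  intro x hx
  have hy : η x ∈ Ioo ta tb := hηbij.mapsTo hx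
  have htf : HasDerivAt (fun t => tf (η t)) ((η' x : ℂ) • tf' (η x)) x := by
    rw [coe_smul]
    exact (hasDerivAt_pi.2 (htfd _ hy)).scomp x (hηd x hx)
  have hf' : f' x =
      (Γ' x).map ofReal *ᵥ tf (η x) + (η' x : ℂ) • ((Γ x).map ofReal *ᵥ tf' (η x)) := by
    refine (hasDerivAt_pi.2 (hfd x hx)).unique ?_
    rw [← mulVec_smul]
    refine (hasDerivAt_map_ofReal_mulVec (hΓd x hx) htf).congr_of_eventuallyEq ?_
    filter_upwards [Ioo_mem_nhds hx.1 hx.2] with t ht using hf t ht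
  have hdetc : ((Γ x).map ofReal).det = 1 := by rw [det_map_ofReal, hdet x hx, ofReal_one]
  have hJ : ((Γ x).map ofReal)ᵀ * Jc * (Γ x).map ofReal = Jc := by
    rw [Jc, transpose_mul_J_mul_self, hdetc, one_smul]
  rw [hf', hf x hx, hg x hx]
  refine dirac_eq_of_transformed_dirac_eq hJ (hdetc ▸ isUnit_one) ?_ ?_ (htsol _ hy)
  · simpa [transpose_map] using congrArg (Matrix.map · ofReal) (hR x hx)
  · simpa [transpose_map, Jr_map_ofReal] using congrArg (Matrix.map · ofReal) (hQ x hx)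

/-- the Liouville transform `f(x) = Γ(x) f̃(η(x))` maps solutions of the
transformed Dirac equation `J f̃' + Q̃ f̃ = R̃ g̃` on `(ã,b̃)` to solutions of
`J f' + Q f = R g` on `(a,b)`, where `η' · R̃∘η = Γ* R Γ` and `η' · Q̃∘η = Γ* Q Γ + Γ* J Γ'`. -/
theorem liouville_transform_maps_solutions
    (a b ta tb : ℝ) (hab : a < b) (htab : ta < tb)
    (η η' : ℝ → ℝ) (Γ Γ' : ℝ → Matrix (Fin 2) (Fin 2) ℝ)
    (hηd : ∀ x ∈ Ioo a b, HasDerivAt η (η' x) x)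
    (hηmono : StrictMonoOn η (Ioo a b))
    (hηbij : BijOn η (Ioo a b) (Ioo ta tb))
    (hΓd : ∀ x ∈ Ioo a b, ∀ i j, HasDerivAt (fun t => Γ t i j) (Γ' x i j) x)
    (hdet : ∀ x ∈ Ioo a b, (Γ x).det = 1)
    (R Q : ℝ → Matrix (Fin 2) (Fin 2) ℝ) (tR tQ : ℝ → Matrix (Fin 2) (Fin 2) ℝ)
    (hR : ∀ x ∈ Ioo a b, η' x • tR (η x) = (Γ x)ᵀ * R x * Γ x)
    (hQ : ∀ x ∈ Ioo a b, η' x • tQ (η x) = (Γ x)ᵀ * Q x * Γ x + (Γ x)ᵀ * Jr * Γ' x)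
    (tf tf' tg : ℝ → Fin 2 → ℂ)
    (htfd : ∀ y ∈ Ioo ta tb, ∀ i, HasDerivAt (fun t => tf t i) (tf' y i) y)
    (htsol : ∀ y ∈ Ioo ta tb,
      Jc *ᵥ tf' y + (tQ y).map Complex.ofReal *ᵥ tf y = (tR y).map Complex.ofReal *ᵥ tg y)
    (f g f' : ℝ → Fin 2 → ℂ)
    (hf : ∀ x ∈ Ioo a b, f x = (Γ x).map Complex.ofReal *ᵥ tf (η x))
    (hg : ∀ x ∈ Ioo a b, g x = (Γ x).map Complex.ofReal *ᵥ tg (η x))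
    (hfd : ∀ x ∈ Ioo a b, ∀ i, HasDerivAt (fun t => f t i) (f' x i) x) :
    ∀ x ∈ Ioo a b,
      Jc *ᵥ f' x + (Q x).map Complex.ofReal *ᵥ f x = (R x).map Complex.ofReal *ᵥ g x :=
  liouville_transform_maps_solutions_general a b ta tb η η' Γ Γ' hηd hηbij hΓd hdet R Q tR tQ hR hQ
    tf tf' tg htfd htsol f g f' hf hg hfd
end
end

section
/- Let φ ∈ ℝ be constant, Γ = e^{φJ}, and suppose Q(x) = [[q_sc(x), κ/x + q_am(x)],[κ/x + q_am(x), −q_sc(x)]] and Q̃(x) = [[q̃_sc(x), κ̃/x + q̃_am(x)],[κ̃/x + q̃_am(x), −q̃_sc(x)]] are trace-free symmetric matrices on (0,∞) with κ, κ̃ ≥ 0 and q_sc, q_am, q̃_sc, q̃_am locally integrable on [0,∞), satisfying Q̃(x) = Γ* Q(x) Γ for almost all x ∈ (0,∞). Then sin φ = 0, Γ = ±I, and κ = κ̃, q_sc = q̃_sc a.e., q_am = q̃_am a.e. -/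
open MeasureTheory Set Matrix

noncomputable section

/-- The rotation matrix `e^{φJ}`. -/
def rotJ (φ : ℝ) : Matrix (Fin 2) (Fin 2) ℝ :=
  !![Real.cos φ, -Real.sin φ; Real.sin φ, Real.cos φ]

/-- The radial Dirac potential matrix. -/
def radQ (κ : ℝ) (qsc qam : ℝ → ℝ) (x : ℝ) : Matrix (Fin 2) (Fin 2) ℝ :=
  !![qsc x, κ / x + qam x; κ / x + qam x, -qsc x]

/-- `c/x` integrable near `0` forces `c = 0`. -/
lemma aux_div {c : ℝ} (h : IntegrableOn (fun x => c / x) (Ioc (0:ℝ) 1)) : c = 0 := by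
  by_contra hc
  have h2 : IntegrableOn (fun x : ℝ => x ^ (-1 : ℝ)) (Ioo (0:ℝ) 1) := by
    have h3 : IntegrableOn (fun x : ℝ => c⁻¹ * (c / x)) (Ioo (0:ℝ) 1) :=
      ((h.mono_set Ioo_subset_Ioc_self).const_mul c⁻¹)
    refine h3.congr_fun (fun x hx => ?_) measurableSet_Ioo
    rw [Real.rpow_neg_one]
    field_simp
  rw [intervalIntegral.integrableOn_Ioo_rpow_iff zero_lt_one] at h2
  exact lt_irrefl _ h2

/-- case `κ > 0`: if the radial Dirac potentials satisfy
`Q̃(x) = e^{-φJ} Q(x) e^{φJ}` a.e. on `(0,∞)` with `κ > 0`, `κ̃ ≥ 0` and locally integrable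
`q_sc, q_am, q̃_sc, q̃_am` on `[0,∞)`, then `sin φ = 0`, `e^{φJ} = ±I`, `κ = κ̃`, and
`q_sc = q̃_sc`, `q_am = q̃_am` almost everywhere. -/
theorem radial_gauge_rigidity
    (φ κ tκ : ℝ) (hκ : 0 < κ) (htκ : 0 ≤ tκ)
    (qsc qam tqsc tqam : ℝ → ℝ)
    (hint : ∀ c > (0:ℝ), IntegrableOn qsc (Ioc 0 c) ∧ IntegrableOn qam (Ioc 0 c) ∧
      IntegrableOn tqsc (Ioc 0 c) ∧ IntegrableOn tqam (Ioc 0 c))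
    (heq : ∀ᵐ x ∂(volume.restrict (Ioi (0:ℝ))),
      radQ tκ tqsc tqam x = (rotJ φ)ᵀ * radQ κ qsc qam x * rotJ φ) :
    Real.sin φ = 0 ∧ (rotJ φ = 1 ∨ rotJ φ = -1) ∧ κ = tκ ∧
    (∀ᵐ x ∂(volume.restrict (Ioi (0:ℝ))), qsc x = tqsc x ∧ qam x = tqam x) := by
  set S := Real.sin φ with hS
  set C := Real.cos φ with hC
  have hpy : S ^ 2 + C ^ 2 = 1 := Real.sin_sq_add_cos_sq φ
  -- entrywise a.e. equations
  have hE : ∀ᵐ x ∂(volume.restrict (Ioi (0:ℝ))),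
      (tqsc x = qsc x * (C^2 - S^2) + (κ/x + qam x) * (2*C*S)) ∧
      (tκ/x + tqam x = (κ/x + qam x) * (C^2 - S^2) - qsc x * (2*C*S)) := by
    filter_upwards [heq] with x hx
    have h00 := congrFun (congrFun hx 0) 0
    have h01 := congrFun (congrFun hx 0) 1
    simp [radQ, rotJ, Matrix.mul_apply, Fin.sum_univ_two, Matrix.vecHead,
      Matrix.vecTail] at h00 h01
    constructor
    · rw [h00]; ring
    · rw [h01]; ring
  obtain ⟨h1, h2, h3, h4⟩ := hint 1 one_pos
  have hsub : Ioc (0:ℝ) 1 ⊆ Ioi 0 := fun x hx => hx.1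
  have hE' : ∀ᵐ x ∂(volume.restrict (Ioc (0:ℝ) 1)),
      (tqsc x = qsc x * (C^2 - S^2) + (κ/x + qam x) * (2*C*S)) ∧
      (tκ/x + tqam x = (κ/x + qam x) * (C^2 - S^2) - qsc x * (2*C*S)) :=
    ae_restrict_of_ae_restrict_of_subset hsub hE
  -- the off-diagonal singularity forces `C*S = 0`
  have hA : κ * (2*C*S) = 0 := by
    apply aux_div
    have hf : IntegrableOn
        (fun x => tqsc x - qsc x * (C^2-S^2) - qam x * (2*C*S)) (Ioc (0:ℝ) 1) :=
      (h3.sub (h1.mul_const _)).sub (h2.mul_const _)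
    refine hf.congr ?_
    filter_upwards [hE'] with x hx
    linear_combination hx.1
  have hCS : C * S = 0 := by
    have : κ * (2*C*S) = κ * (2*(C*S)) := by ring
    rw [this] at hA
    rcases mul_eq_zero.1 hA with h | h
    · exact absurd h hκ.ne'
    · linarith [h]
  -- the diagonal singularity forces `tκ = κ (C² − S²)`
  have hB : tκ - κ * (C^2 - S^2) = 0 := by
    apply aux_div
    have hf : IntegrableOn
        (fun x => qam x * (C^2-S^2) - qsc x * (2*C*S) - tqam x) (Ioc (0:ℝ) 1) :=
      ((h2.mul_const _).sub (h1.mul_const _)).sub h4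
    refine hf.congr ?_
    filter_upwards [hE'] with x hx
    linear_combination -hx.2
  -- conclude `S = 0`
  have hSzero : S = 0 := by
    rcases mul_eq_zero.1 hCS with h | h
    · exfalso
      have hS2 : S ^ 2 = 1 := by linear_combination hpy - C * h
      have : tκ = -κ := by linear_combination hB + κ * C * h - κ * hS2
      linarith
    · exact h
  have hC2 : C ^ 2 = 1 := by linear_combination hpy - S * hSzero
  have hκtκ : κ = tκ := by linear_combination -hB - κ * hC2 + κ * S * hSzero
  refine ⟨hSzero, ?_, hκtκ, ?_⟩
  · have : (C - 1) * (C + 1) = 0 := by nlinarith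
    rcases mul_eq_zero.1 this with h | h
    · left
      have hC1 : C = 1 := by linarith
      rw [rotJ, ← hS, ← hC, hSzero, hC1, Matrix.one_fin_two]
      norm_num
    · right
      have hC1 : C = -1 := by linarith
      rw [rotJ, ← hS, ← hC, hSzero, hC1]
      ext i j
      fin_cases i <;> fin_cases j <;> simp
  · filter_upwards [hE] with x hx
    have e1 := hx.1
    have e2 := hx.2
    rw [hSzero] at e1 e2
    constructor
    · linear_combination -e1 - qsc x * hC2
    · linear_combination -e2 - (qam x + κ / x) * hC2 - (1 / x) * hκtκ
end
end

section
/- Suppose f, g : (a,b) → (0,∞) with f nondecreasing and for all x: ∫_{a}^{x} f(s) ds = ∫_{ã}^{η(x)} g(s) ds where f, g are locally integrable, g > 0 a.e., and η : (a,b) → (ã,b̃) is a continuous strictly increasing bijection. Then η is locally absolutely continuous and f(x) = η'(x) g(η(x)) for almost all x ∈ (a,b). -/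
/-!
Push the measure `f dx` on `(a, β)` forward by `η`: the identity `∫_a^x f = ∫_ta^(η x) g` says
that the distribution functions agree, so the image is `g dy` on `(ta, η β)`. Since `f > 0`, `η`
therefore pulls Lebesgue-null sets back to null sets, so for a.e. `x` the primitive
`G y = ∫_ta^y g` has derivative `g (η x) > 0` at `η x`, and differentiating `G ∘ η = F` gives
`η' = f / g ∘ η` there. Changing variables in the same pushforward gives
`∫_a^β f / g ∘ η = ∫_ta^(η β) g / g = η β - ta`.
-/

open MeasureTheory Set Filter Topology
open scoped ENNReal

theorem ae_restrict_Ioo_of_forall_lt {p : ℝ → Prop} {a b : ℝ}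
    (h : ∀ β ∈ Ioo a b, ∀ᵐ x ∂volume.restrict (Ioo a β), p x) :
    ∀ᵐ x ∂volume.restrict (Ioo a b), p x := by
  have hq : ∀ q : ℚ, ∀ᵐ x, (q : ℝ) ∈ Ioo a b → x ∈ Ioo a (q : ℝ) → p x := by
    intro q
    by_cases hqab : (q : ℝ) ∈ Ioo a b
    · filter_upwards [(ae_restrict_iff' measurableSet_Ioo).1 (h q hqab)] with x hx _ using hx
    · exact Eventually.of_forall fun x hq' => absurd hq' hqab
  rw [ae_restrict_iff' measurableSet_Ioo]
  filter_upwards [ae_all_iff.2 hq] with x hx hxab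
  obtain ⟨q, hxq, hqb⟩ := exists_rat_btwn hxab.2
  exact hx q ⟨hxab.1.trans hxq, hqb⟩ ⟨hxab.1, hxq⟩

theorem ae_hasDerivAt_integral_Ioo {E : Type*} [NormedAddCommGroup E] [NormedSpace ℝ E]
    [CompleteSpace E] {f : ℝ → E} {a b : ℝ} (hf : ∀ x ∈ Ioo a b, IntegrableOn f (Ioo a x)) :
    ∀ᵐ x ∂volume.restrict (Ioo a b), HasDerivAt (fun t => ∫ s in Ioo a t, f s) (f x) x := by
  refine ae_restrict_Ioo_of_forall_lt fun β hβ => ?_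
  have hloc := ((hf β hβ).integrable_indicator measurableSet_Ioo).locallyIntegrable
  filter_upwards [ae_restrict_of_ae (LocallyIntegrable.ae_hasDerivAt_integral hloc),
    ae_restrict_mem measurableSet_Ioo] with x hx hxβ
  have hder := hx a
  rw [indicator_of_mem hxβ] at hder
  refine hder.congr_of_eventuallyEq ?_
  filter_upwards [Ioo_mem_nhds hxβ.1 hxβ.2] with t ht
  rw [intervalIntegral.integral_of_le ht.1.le, setIntegral_indicator measurableSet_Ioo,
    inter_eq_left.2 (Ioc_subset_Ioo_right ht.2), integral_Ioc_eq_integral_Ioo]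

theorem ae_comp_of_map_withDensity_eq {α β : Type*} [MeasurableSpace α] [MeasurableSpace β]
    {μ : Measure α} {ν : Measure β} {η : α → β} {F : α → ℝ≥0∞} {G : β → ℝ≥0∞}
    (hmap : (μ.withDensity F).map η = ν.withDensity G) (hη : AEMeasurable η μ)
    (hF : AEMeasurable F μ) (hF0 : ∀ᵐ x ∂μ, F x ≠ 0) {p : β → Prop} (hp : ∀ᵐ y ∂ν, p y) :
    ∀ᵐ x ∂μ, p (η x) := by
  have hpG : ∀ᵐ y ∂(μ.withDensity F).map η, p y :=
    hmap ▸ (withDensity_absolutelyContinuous ν G).ae_le hp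
  have hpF := ae_of_ae_map (hη.mono_ac (withDensity_absolutelyContinuous μ F)) hpG
  rw [ae_withDensity_iff' hF] at hpF
  filter_upwards [hpF, hF0] with x hx hx0 using hx hx0

theorem lintegral_mul_comp_of_map_withDensity_eq {α β : Type*} [MeasurableSpace α]
    [MeasurableSpace β] {μ : Measure α} {ν : Measure β} {η : α → β} {F : α → ℝ≥0∞}
    {G : β → ℝ≥0∞} (hmap : (μ.withDensity F).map η = ν.withDensity G) (hη : AEMeasurable η μ)
    (hF : AEMeasurable F μ) (hG : AEMeasurable G ν) {φ : β → ℝ≥0∞} (hφ : Measurable φ) :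
    ∫⁻ x, F x * φ (η x) ∂μ = ∫⁻ y, G y * φ y ∂ν := by
  calc ∫⁻ x, F x * φ (η x) ∂μ = ∫⁻ x, φ (η x) ∂μ.withDensity F :=
        (lintegral_withDensity_eq_lintegral_mul₀ hF (hφ.comp_aemeasurable hη)).symm
    _ = ∫⁻ y, φ y ∂ν.withDensity G := by
        rw [← hmap, lintegral_map' hφ.aemeasurable
          (hη.mono_ac (withDensity_absolutelyContinuous μ F))]
    _ = ∫⁻ y, G y * φ y ∂ν := lintegral_withDensity_eq_lintegral_mul₀ hG hφ.aemeasurable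

theorem StrictMonoOn.bijOn_Ioo_of_bijOn {η : ℝ → ℝ} {a b ta tb β : ℝ}
    (hη : StrictMonoOn η (Ioo a b)) (hbij : BijOn η (Ioo a b) (Ioo ta tb)) (hβ : β ∈ Ioo a b) :
    BijOn η (Ioo a β) (Ioo ta (η β)) := by
  have hsub : Ioo a β ⊆ Ioo a b := Ioo_subset_Ioo_right hβ.2.le
  refine ⟨fun x hx => ⟨(hbij.mapsTo (hsub hx)).1, hη (hsub hx) hβ hx.2⟩,
    hη.injOn.mono hsub, fun y hy => ?_⟩
  obtain ⟨c, hc, rfl⟩ := hbij.surjOn ⟨hy.1, hy.2.trans (hbij.mapsTo hβ).2⟩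
  exact ⟨c, ⟨hc.1, (hη.lt_iff_lt hc hβ).1 hy.2⟩, rfl⟩

theorem StrictMonoOn.preimage_Iic_inter_Ioo {η : ℝ → ℝ} {a b c : ℝ}
    (hη : StrictMonoOn η (Ioo a b)) (hc : c ∈ Ioo a b) :
    η ⁻¹' Iic (η c) ∩ Ioo a b = Ioc a c := by
  ext x
  constructor
  · rintro ⟨hxc, hx⟩
    exact ⟨hx.1, (hη.le_iff_le hx hc).1 hxc⟩
  · rintro ⟨hax, hxc⟩
    have hx : x ∈ Ioo a b := ⟨hax, hxc.trans_lt hc.2⟩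
    exact ⟨(hη.le_iff_le hx hc).2 hxc, hx⟩

theorem withDensity_ofReal_apply {μ : Measure ℝ} [SFinite μ] {f : ℝ → ℝ} {s : Set ℝ}
    (hf : IntegrableOn f s μ) (hf0 : ∀ᵐ x ∂μ.restrict s, 0 ≤ f x) (hs : MeasurableSet s)
    (t : Set ℝ) :
    (μ.restrict s).withDensity (fun x => ENNReal.ofReal (f x)) t =
      ENNReal.ofReal (∫ x in t ∩ s, f x ∂μ) := by
  rw [withDensity_apply' _ t, Measure.restrict_restrict' hs,
    ofReal_integral_eq_lintegral_ofReal (hf.mono_set inter_subset_right)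
      (ae_restrict_of_ae_restrict_of_subset inter_subset_right hf0)]

theorem map_withDensity_eq_of_integral_Ioo_eq {f g η : ℝ → ℝ} {a b ta tb : ℝ}
    (hf : IntegrableOn f (Ioo a b)) (hf0 : ∀ᵐ x ∂volume.restrict (Ioo a b), 0 ≤ f x)
    (hg : IntegrableOn g (Ioo ta tb)) (hg0 : ∀ᵐ y ∂volume.restrict (Ioo ta tb), 0 ≤ g y)
    (hη : StrictMonoOn η (Ioo a b)) (hbij : BijOn η (Ioo a b) (Ioo ta tb))
    (heq : ∀ x ∈ Ioo a b, ∫ s in Ioo a x, f s = ∫ s in Ioo ta (η x), g s)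
    (htotal : ∫ s in Ioo a b, f s = ∫ s in Ioo ta tb, g s) :
    ((volume.restrict (Ioo a b)).withDensity fun x => ENNReal.ofReal (f x)).map η =
      (volume.restrict (Ioo ta tb)).withDensity fun y => ENNReal.ofReal (g y) := by
  have hηm : AEMeasurable η
      ((volume.restrict (Ioo a b)).withDensity fun x => ENNReal.ofReal (f x)) :=
    (aemeasurable_restrict_of_monotoneOn measurableSet_Ioo hη.monotoneOn).mono_ac
      (withDensity_absolutelyContinuous _ _)
  have := isFiniteMeasure_withDensity_ofReal hf.hasFiniteIntegral
  refine Measure.ext_of_Iic _ _ fun y => ?_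
  rw [Measure.map_apply_of_aemeasurable hηm measurableSet_Iic,
    withDensity_ofReal_apply hf hf0 measurableSet_Ioo,
    withDensity_ofReal_apply hg hg0 measurableSet_Ioo]
  congr 1
  rcases le_or_gt y ta with hy | hy
  · have h1 : η ⁻¹' Iic y ∩ Ioo a b = ∅ :=
      eq_empty_of_forall_notMem fun x hx => (hbij.mapsTo hx.2).1.not_ge (hx.1.trans hy)
    have h2 : Iic y ∩ Ioo ta tb = ∅ :=
      eq_empty_of_forall_notMem fun z hz => hz.2.1.not_ge (hz.1.trans hy)
    simp [h1, h2]
  rcases le_or_gt tb y with hy' | hy'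
  · have h1 : η ⁻¹' Iic y ∩ Ioo a b = Ioo a b :=
      inter_eq_right.2 fun x hx => (hbij.mapsTo hx).2.le.trans hy'
    have h2 : Iic y ∩ Ioo ta tb = Ioo ta tb := inter_eq_right.2 fun z hz => hz.2.le.trans hy'
    rw [h1, h2, htotal]
  obtain ⟨c, hc, rfl⟩ := hbij.surjOn ⟨hy, hy'⟩
  have h2 : Iic (η c) ∩ Ioo ta tb = Ioc ta (η c) := by
    ext z
    exact ⟨fun hz => ⟨hz.2.1, hz.1⟩, fun hz => ⟨hz.2, hz.1, hz.2.trans_lt hy'⟩⟩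
  rw [hη.preimage_Iic_inter_Ioo hc, h2, integral_Ioc_eq_integral_Ioo,
    integral_Ioc_eq_integral_Ioo, heq c hc]

theorem integral_div_comp_eq_of_map_withDensity_eq {f g η : ℝ → ℝ} {a b ta tb : ℝ}
    (hmap : ((volume.restrict (Ioo a b)).withDensity fun x => ENNReal.ofReal (f x)).map η =
      (volume.restrict (Ioo ta tb)).withDensity fun y => ENNReal.ofReal (g y))
    (hη : AEMeasurable η (volume.restrict (Ioo a b)))
    (hfm : AEMeasurable f (volume.restrict (Ioo a b))) (hfpos : ∀ x ∈ Ioo a b, 0 < f x)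
    (hgm : Measurable g) (hgpos : ∀ᵐ y ∂volume.restrict (Ioo ta tb), 0 < g y) (htab : ta ≤ tb) :
    IntegrableOn (fun x => f x / g (η x)) (Ioo a b) ∧
      ∫ x in Ioo a b, f x / g (η x) = tb - ta := by
  have hgη : ∀ᵐ x ∂volume.restrict (Ioo a b), 0 < g (η x) := by
    refine ae_comp_of_map_withDensity_eq hmap hη hfm.ennreal_ofReal ?_ hgpos
    filter_upwards [ae_restrict_mem measurableSet_Ioo] with x hx
    exact (ENNReal.ofReal_pos.2 (hfpos x hx)).ne'
  have hnn : ∀ᵐ x ∂volume.restrict (Ioo a b), 0 ≤ f x / g (η x) := by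
    filter_upwards [hgη, ae_restrict_mem measurableSet_Ioo] with x hg hx
    exact div_nonneg (hfpos x hx).le hg.le
  have hm : AEStronglyMeasurable (fun x => f x / g (η x)) (volume.restrict (Ioo a b)) :=
    (hfm.div (hgm.comp_aemeasurable hη)).aestronglyMeasurable
  have hlint : ∫⁻ x in Ioo a b, ENNReal.ofReal (f x / g (η x)) = ENNReal.ofReal (tb - ta) :=
    calc ∫⁻ x in Ioo a b, ENNReal.ofReal (f x / g (η x))
        = ∫⁻ x in Ioo a b, ENNReal.ofReal (f x) * ENNReal.ofReal (g (η x))⁻¹ := by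
          refine setLIntegral_congr_fun measurableSet_Ioo fun x hx => ?_
          rw [div_eq_mul_inv, ENNReal.ofReal_mul (hfpos x hx).le]
      _ = ∫⁻ y in Ioo ta tb, ENNReal.ofReal (g y) * ENNReal.ofReal (g y)⁻¹ :=
          lintegral_mul_comp_of_map_withDensity_eq hmap hη hfm.ennreal_ofReal
            hgm.ennreal_ofReal.aemeasurable hgm.inv.ennreal_ofReal
      _ = ∫⁻ _ in Ioo ta tb, 1 := by
          refine lintegral_congr_ae ?_
          filter_upwards [hgpos] with y hy
          rw [← ENNReal.ofReal_mul hy.le, mul_inv_cancel₀ hy.ne', ENNReal.ofReal_one]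
      _ = ENNReal.ofReal (tb - ta) := by rw [setLIntegral_one, Real.volume_Ioo]
  refine ⟨⟨hm, ?_⟩, ?_⟩
  · rw [hasFiniteIntegral_iff_ofReal hnn, hlint]
    exact ENNReal.ofReal_lt_top
  · rw [integral_eq_lintegral_of_nonneg_ae hnn hm, hlint, ENNReal.toReal_ofReal (sub_nonneg.2 htab)]

theorem map_withDensity_Ioo_eq_of_mem {f g η : ℝ → ℝ} {a b ta tb β : ℝ}
    (hfpos : ∀ x ∈ Ioo a b, 0 < f x) (hgpos : ∀ᵐ y ∂volume.restrict (Ioo ta tb), 0 < g y)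
    (hfint : ∀ x ∈ Ioo a b, IntegrableOn f (Ioo a x))
    (hgint : ∀ y ∈ Ioo ta tb, IntegrableOn g (Ioo ta y))
    (hη : StrictMonoOn η (Ioo a b)) (hbij : BijOn η (Ioo a b) (Ioo ta tb))
    (heq : ∀ x ∈ Ioo a b, ∫ s in Ioo a x, f s = ∫ s in Ioo ta (η x), g s) (hβ : β ∈ Ioo a b) :
    ((volume.restrict (Ioo a β)).withDensity fun x => ENNReal.ofReal (f x)).map η =
      (volume.restrict (Ioo ta (η β))).withDensity fun y => ENNReal.ofReal (g y) := by
  have hsub : Ioo a β ⊆ Ioo a b := Ioo_subset_Ioo_right hβ.2.le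
  refine map_withDensity_eq_of_integral_Ioo_eq (hfint β hβ)
    (ae_restrict_of_forall_mem measurableSet_Ioo fun x hx => (hfpos x (hsub hx)).le)
    (hgint _ (hbij.mapsTo hβ)) ?_ (hη.mono hsub) (hη.bijOn_Ioo_of_bijOn hbij hβ)
    (fun x hx => heq x (hsub hx)) (heq β hβ)
  filter_upwards [ae_restrict_of_ae_restrict_of_subset
    (Ioo_subset_Ioo_right (hbij.mapsTo hβ).2.le) hgpos] with y hy using hy.le

theorem ae_comp_of_integral_Ioo_eq {f g η : ℝ → ℝ} {a b ta tb : ℝ}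
    (hfpos : ∀ x ∈ Ioo a b, 0 < f x) (hgpos : ∀ᵐ y ∂volume.restrict (Ioo ta tb), 0 < g y)
    (hfint : ∀ x ∈ Ioo a b, IntegrableOn f (Ioo a x))
    (hgint : ∀ y ∈ Ioo ta tb, IntegrableOn g (Ioo ta y))
    (hη : StrictMonoOn η (Ioo a b)) (hbij : BijOn η (Ioo a b) (Ioo ta tb))
    (heq : ∀ x ∈ Ioo a b, ∫ s in Ioo a x, f s = ∫ s in Ioo ta (η x), g s) {p : ℝ → Prop}
    (hp : ∀ᵐ y ∂volume.restrict (Ioo ta tb), p y) :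
    ∀ᵐ x ∂volume.restrict (Ioo a b), p (η x) := by
  refine ae_restrict_Ioo_of_forall_lt fun β hβ => ?_
  have hsub : Ioo a β ⊆ Ioo a b := Ioo_subset_Ioo_right hβ.2.le
  refine ae_comp_of_map_withDensity_eq
    (map_withDensity_Ioo_eq_of_mem hfpos hgpos hfint hgint hη hbij heq hβ)
    (aemeasurable_restrict_of_monotoneOn measurableSet_Ioo (hη.mono hsub).monotoneOn)
    (hfint β hβ).aemeasurable.ennreal_ofReal ?_
    (ae_restrict_of_ae_restrict_of_subset (Ioo_subset_Ioo_right (hbij.mapsTo hβ).2.le) hp)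
  exact ae_restrict_of_forall_mem measurableSet_Ioo fun x hx =>
    (ENNReal.ofReal_pos.2 (hfpos x (hsub hx))).ne'

theorem intervalIntegral_div_comp_of_integral_Ioo_eq {f g η : ℝ → ℝ} {a b ta tb β : ℝ}
    (hfpos : ∀ x ∈ Ioo a b, 0 < f x) (hgmeas : Measurable g)
    (hgpos : ∀ᵐ y ∂volume.restrict (Ioo ta tb), 0 < g y)
    (hfint : ∀ x ∈ Ioo a b, IntegrableOn f (Ioo a x))
    (hgint : ∀ y ∈ Ioo ta tb, IntegrableOn g (Ioo ta y))
    (hη : StrictMonoOn η (Ioo a b)) (hbij : BijOn η (Ioo a b) (Ioo ta tb))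
    (heq : ∀ x ∈ Ioo a b, ∫ s in Ioo a x, f s = ∫ s in Ioo ta (η x), g s) (hβ : β ∈ Ioo a b) :
    IntervalIntegrable (fun x => f x / g (η x)) volume a β ∧
      ∫ x in a..β, f x / g (η x) = η β - ta := by
  have hsub : Ioo a β ⊆ Ioo a b := Ioo_subset_Ioo_right hβ.2.le
  obtain ⟨hint, hval⟩ := integral_div_comp_eq_of_map_withDensity_eq
    (map_withDensity_Ioo_eq_of_mem hfpos hgpos hfint hgint hη hbij heq hβ)
    (aemeasurable_restrict_of_monotoneOn measurableSet_Ioo (hη.mono hsub).monotoneOn)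
    (hfint β hβ).aemeasurable (fun x hx => hfpos x (hsub hx)) hgmeas
    (ae_restrict_of_ae_restrict_of_subset (Ioo_subset_Ioo_right (hbij.mapsTo hβ).2.le) hgpos)
    (hbij.mapsTo hβ).1.le
  rw [intervalIntegral.integral_of_le hβ.1.le, integral_Ioc_eq_integral_Ioo, hval]
  exact ⟨(intervalIntegrable_iff_integrableOn_Ioo_of_le hβ.1.le).2 hint, rfl⟩

theorem change_of_variable_absolutely_continuous_general
    (a b ta tb : ℝ)
    (f g η : ℝ → ℝ)
    (hfpos : ∀ x ∈ Ioo a b, 0 < f x)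
    (hgmeas : Measurable g)
    (hgpos : ∀ᵐ y ∂(volume.restrict (Ioo ta tb)), 0 < g y)
    (hfint : ∀ x ∈ Ioo a b, IntegrableOn f (Ioo a x))
    (hgint : ∀ y ∈ Ioo ta tb, IntegrableOn g (Ioo ta y))
    (hηcont : ContinuousOn η (Ioo a b))
    (hηmono : StrictMonoOn η (Ioo a b))
    (hηbij : BijOn η (Ioo a b) (Ioo ta tb))
    (heq : ∀ x ∈ Ioo a b, ∫ s in Ioo a x, f s = ∫ s in Ioo ta (η x), g s) :
    ∃ η' : ℝ → ℝ,
      (∀ α ∈ Ioo a b, ∀ β ∈ Ioo a b, η β - η α = ∫ t in α..β, η' t) ∧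
      (∀ᵐ x ∂(volume.restrict (Ioo a b)), HasDerivAt η (η' x) x ∧ f x = η' x * g (η x)) := by
  refine ⟨fun x => f x / g (η x), fun α hα β hβ => ?_, ?_⟩
  · obtain ⟨hαint, hαval⟩ := intervalIntegral_div_comp_of_integral_Ioo_eq hfpos hgmeas hgpos
      hfint hgint hηmono hηbij heq hα
    obtain ⟨hβint, hβval⟩ := intervalIntegral_div_comp_of_integral_Ioo_eq hfpos hgmeas hgpos
      hfint hgint hηmono hηbij heq hβ
    rw [← intervalIntegral.integral_interval_sub_left hβint hαint, hβval, hαval]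
    ring
  have hGη := ae_comp_of_integral_Ioo_eq hfpos hgpos hfint hgint hηmono hηbij heq
    ((ae_hasDerivAt_integral_Ioo hgint).and hgpos)
  filter_upwards [ae_hasDerivAt_integral_Ioo hfint, hGη, ae_restrict_mem measurableSet_Ioo]
    with x hF ⟨hG, hg⟩ hx
  have hcomp : (fun t => ∫ s in Ioo ta t, g s) ∘ η =ᶠ[𝓝 x] fun t => ∫ s in Ioo a t, f s := by
    filter_upwards [Ioo_mem_nhds hx.1 hx.2] with t ht using (heq t ht).symm
  exact ⟨hG.of_comp_left (hηcont.continuousAt (Ioo_mem_nhds hx.1 hx.2)) hF hg.ne' hcomp,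
    (div_mul_cancel₀ _ hg.ne').symm⟩

/-- if `∫_a^x f = ∫_ã^{η(x)} g` for a nondecreasing positive `f`, a positive
locally integrable `g` and a continuous strictly increasing bijection
`η : (a,b) → (ã,b̃)`, then `η` is locally absolutely continuous (expressed by the fundamental
theorem of calculus for its derivative) and `f(x) = η'(x) g(η(x))` almost everywhere. -/
theorem change_of_variable_absolutely_continuous
    (a b ta tb : ℝ) (hab : a < b) (htab : ta < tb)
    (f g η : ℝ → ℝ)
    (hfpos : ∀ x ∈ Ioo a b, 0 < f x)
    (hfmono : MonotoneOn f (Ioo a b))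
    (hgmeas : Measurable g)
    (hgpos : ∀ᵐ y ∂(volume.restrict (Ioo ta tb)), 0 < g y)
    (hfint : ∀ x ∈ Ioo a b, IntegrableOn f (Ioo a x))
    (hgint : ∀ y ∈ Ioo ta tb, IntegrableOn g (Ioo ta y))
    (hηcont : ContinuousOn η (Ioo a b))
    (hηmono : StrictMonoOn η (Ioo a b))
    (hηbij : BijOn η (Ioo a b) (Ioo ta tb))
    (heq : ∀ x ∈ Ioo a b, ∫ s in Ioo a x, f s = ∫ s in Ioo ta (η x), g s) :
    ∃ η' : ℝ → ℝ,
      (∀ α ∈ Ioo a b, ∀ β ∈ Ioo a b, η β - η α = ∫ t in α..β, η' t) ∧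
      (∀ᵐ x ∂(volume.restrict (Ioo a b)), HasDerivAt η (η' x) x ∧ f x = η' x * g (η x)) :=
  change_of_variable_absolutely_continuous_general a b ta tb f g η hfpos hgmeas hgpos hfint hgint
    hηcont hηmono hηbij heq
end
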